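/- Let m ≥ 2 be a natural number and q = exp(2πi/m) ∈ ℂ the fundamental m-th root of unity. Then for every natural number n with 0 ≤ n ≤ m−1, the complex identity |{n+1}_q| − exp(iπ/m)·|{n}_q| = exp(−iπn/m) holds, where |·| denotes the complex absolute value regarded as a complex number. -/

import Mathlib

/-!
With `θ = π/m` and `q = e^{2iθ}`, the factorisation `e^{2ix} - 1 = 2i sin x · e^{ix}` turns
the geometric sum into `{k}_q = e^{i(k-1)θ} sin(kθ) / sin θ`. For `k ≤ m` we have
`0 ≤ kθ ≤ π`, so `|{k}_q| = sin(kθ) / sin θ`, and the identity becomes the addition formula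
`sin((n+1)θ) - e^{iθ} sin(nθ) = sin θ · e^{-inθ}`.
-/

open Complex Finset

namespace Complex

theorem exp_two_mul_mul_I_sub_one (x : ℂ) :
    exp (2 * x * I) - 1 = 2 * I * sin x * exp (x * I) := by
  have h : exp (2 * x * I) = exp (x * I) * exp (x * I) := by rw [← exp_add]; ring_nf
  rw [h, ← cos_add_sin_I, ← cos_sq_add_sin_sq x]
  linear_combination -sin x ^ 2 * I_sq

theorem geom_sum_exp_two_mul_mul_I (θ : ℂ) (n : ℕ) :
    (∑ k ∈ range n, exp (2 * θ * I) ^ k) * (exp (θ * I) * sin θ) =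
      exp (n * θ * I) * sin (n * θ) := by
  have h := geom_sum_mul (exp (2 * θ * I)) n
  rw [← exp_nat_mul, ← mul_assoc, mul_left_comm, exp_two_mul_mul_I_sub_one,
    exp_two_mul_mul_I_sub_one] at h
  have h2I : (2 * I : ℂ) ≠ 0 := by simp
  apply mul_left_cancel₀ h2I
  linear_combination h

theorem sin_add_sub_exp_mul_I_mul_sin (x y : ℂ) :
    sin (x + y) - exp (y * I) * sin x = sin y * exp (-(x * I)) := by
  rw [sin_add, ← cos_add_sin_I, ← neg_mul, ← cos_add_sin_I, cos_neg, sin_neg]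
  ring

end Complex

theorem norm_geom_sum_exp_two_mul_mul_I (θ : ℝ) (n : ℕ) :
    ‖∑ k ∈ range n, exp (2 * θ * I) ^ k‖ * |Real.sin θ| = |Real.sin (n * θ)| := by
  have h := congrArg norm (geom_sum_exp_two_mul_mul_I θ n)
  simpa [norm_mul, ← ofReal_natCast, ← ofReal_mul, ← ofReal_sin] using h

theorem norm_geom_sum_exp_two_mul_mul_I_of_le_pi {θ : ℝ} (hθ₀ : 0 < θ) (hθπ : θ < Real.pi)
    {n : ℕ} (hnθ : n * θ ≤ Real.pi) :
    ‖∑ k ∈ range n, exp (2 * θ * I) ^ k‖ = Real.sin (n * θ) / Real.sin θ := by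
  have hsin : 0 < Real.sin θ := Real.sin_pos_of_pos_of_lt_pi hθ₀ hθπ
  have hsin_n : 0 ≤ Real.sin (n * θ) := Real.sin_nonneg_of_nonneg_of_le_pi (by positivity) hnθ
  rw [eq_div_iff hsin.ne', ← abs_of_pos hsin, ← abs_of_nonneg hsin_n]
  exact norm_geom_sum_exp_two_mul_mul_I θ n

/-- For `m ≥ 2` and `q = exp(2πi/m)` the fundamental `m`-th root of unity, the moduli of
the Q-numbers `{n}_q = ∑_{k<n} q^k` satisfy the Biedenharn–Macfarlane-type identity
`|{n+1}_q| − exp(iπ/m)·|{n}_q| = exp(−iπn/m)` for all `0 ≤ n ≤ m−1`, where the absolute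
values are regarded as complex numbers. -/
theorem abs_Qnum_biedenharn_identity (m : ℕ) (hm : 2 ≤ m)
    (q : ℂ) (hq : q = Complex.exp (2 * Real.pi * Complex.I / m))
    (n : ℕ) (hn : n ≤ m - 1) :
    (‖∑ k ∈ Finset.range (n + 1), q ^ k‖ : ℂ)
      - Complex.exp (Real.pi * Complex.I / m) * (‖∑ k ∈ Finset.range n, q ^ k‖ : ℂ)
      = Complex.exp (-(Real.pi * Complex.I * n / m)) := by
  set θ : ℝ := Real.pi / m with hθ
  have hm₀ : (0 : ℝ) < m := by positivity
  have hθ₀ : 0 < θ := by positivity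
  have hθπ : θ < Real.pi := div_lt_self Real.pi_pos (by exact_mod_cast hm)
  have hle : ∀ k ≤ m, (k : ℝ) * θ ≤ Real.pi := fun k hk =>
    calc (k : ℝ) * θ ≤ m * θ := by gcongr
      _ = Real.pi := by rw [hθ]; field_simp
  have hsin : sin θ ≠ 0 := by
    exact_mod_cast (Real.sin_pos_of_pos_of_lt_pi hθ₀ hθπ).ne'
  have hq' : q = exp (2 * θ * I) := by rw [hq, hθ]; push_cast; ring_nf
  have hθI : exp (Real.pi * I / m) = exp (θ * I) := by rw [hθ]; push_cast; ring_nf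
  have hnθI : exp (-(Real.pi * I * n / m)) = exp (-(n * θ * I)) := by
    rw [hθ]; push_cast; ring_nf
  rw [hq', hθI, hnθI,
    norm_geom_sum_exp_two_mul_mul_I_of_le_pi hθ₀ hθπ (hle (n + 1) (by omega)),
    norm_geom_sum_exp_two_mul_mul_I_of_le_pi hθ₀ hθπ (hle n (by omega))]
  push_cast
  rw [mul_div_assoc', div_sub_div_same, div_eq_iff hsin, add_one_mul]
  linear_combination Complex.sin_add_sub_exp_mul_I_mul_sin (n * θ) θ
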